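/- arXiv:2112.08093 — 5 statements merged into one kernel-verified Lean document; each statement's English description precedes it below -/
import Mathlib

section
/- For fixed λ > 0 and γ > 0, and for any real t, the infimum over ω ≥ 0 of ω·|t| + (γ/2)(ω − λ)² equals λ|t| − t²/(2γ) when |t| ≤ λγ, and equals λ²γ/2 when |t| > λγ. -/
theorem mcp_infimum (lam gam t : ℝ) (hlam : 0 < lam) (hgam : 0 < gam) :
    sInf {x : ℝ | ∃ ω : ℝ, 0 ≤ ω ∧ x = ω * |t| + gam / 2 * (ω - lam) ^ 2} =
      if |t| ≤ lam * gam then lam * |t| - t ^ 2 / (2 * gam) else lam ^ 2 * gam / 2 := by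
  have ht : 0 ≤ |t| := abs_nonneg t
  have ht2 : t ^ 2 = |t| ^ 2 := (sq_abs t).symm
  have h2g : (0:ℝ) < 2 * gam := by linarith
  have e : t ^ 2 / (2 * gam) * (2 * gam) = |t| ^ 2 := by
    rw [div_mul_cancel₀ _ (ne_of_gt h2g), ht2]
  split_ifs with h
  · apply le_antisymm
    · apply csInf_le
      · refine ⟨lam * |t| - t ^ 2 / (2 * gam), ?_⟩
        rintro x ⟨ω, hω, rfl⟩
        nlinarith [sq_nonneg (gam * (ω - lam) + |t|)]
      · refine ⟨lam - |t| / gam, ?_, ?_⟩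
        · rw [sub_nonneg, div_le_iff₀ hgam]; linarith
        · field_simp
          rw [ht2]; ring
    · refine le_csInf ⟨0 * |t| + gam / 2 * (0 - lam) ^ 2, 0, le_refl 0, rfl⟩ ?_
      rintro x ⟨ω, hω, rfl⟩
      nlinarith [sq_nonneg (gam * (ω - lam) + |t|)]
  · push_neg at h
    apply le_antisymm
    · apply csInf_le
      · refine ⟨lam ^ 2 * gam / 2, ?_⟩
        rintro x ⟨ω, hω, rfl⟩
        nlinarith [mul_nonneg hω (le_of_lt (sub_pos.mpr h)), sq_nonneg ω]
      · exact ⟨0, le_refl 0, by ring⟩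
    · refine le_csInf ⟨0 * |t| + gam / 2 * (0 - lam) ^ 2, 0, le_refl 0, rfl⟩ ?_
      rintro x ⟨ω, hω, rfl⟩
      nlinarith [mul_nonneg hω (le_of_lt (sub_pos.mpr h)), sq_nonneg ω]
end

section
/- For nonnegative vectors ω, λ ∈ ℝᵖ and β ∈ ℝᵖ, the infimum over ω ≥ 0 (componentwise) of ωᵀ|β| + (γ/2)‖ω − λ‖₂² equals the sum over j of λⱼΨ_γ(|βⱼ|), where Ψ_γ(|βⱼ|) = λⱼγ/2 if |βⱼ| ≥ λⱼγ and |βⱼ| − βⱼ²/(2λⱼγ) otherwise. -/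
lemma point_ge (gam l b t : ℝ) (hg : 0 < gam) (hl : 0 < l) (ht : 0 ≤ t) :
    l * (if |b| ≥ l * gam then l * gam / 2 else |b| - b ^ 2 / (2 * l * gam)) ≤
      t * |b| + gam / 2 * (t - l) ^ 2 := by
  split_ifs with h
  · nlinarith [abs_nonneg b, sq_nonneg t]
  · push_neg at h
    have h2 : l * (|b| - b ^ 2 / (2 * l * gam)) = l * |b| - b ^ 2 / (2 * gam) := by
      field_simp
    rw [h2]
    have key : 0 ≤ (t * |b| + gam / 2 * (t - l) ^ 2 - (l * |b| - b ^ 2 / (2 * gam))) * (2 * gam) := by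
      have he : (t * |b| + gam / 2 * (t - l) ^ 2 - (l * |b| - b ^ 2 / (2 * gam))) * (2 * gam)
          = (gam * (t - l) + |b|) ^ 2 := by
        field_simp
        nlinarith [sq_abs b]
      rw [he]; positivity
    nlinarith [key]

lemma point_eq (gam l b : ℝ) (hg : 0 < gam) (hl : 0 < l) :
    (max (l - |b| / gam) 0) * |b| + gam / 2 * (max (l - |b| / gam) 0 - l) ^ 2 =
      l * (if |b| ≥ l * gam then l * gam / 2 else |b| - b ^ 2 / (2 * l * gam)) := by
  split_ifs with h
  · have hle : l - |b| / gam ≤ 0 := by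
      rw [sub_nonpos, le_div_iff₀ hg]; linarith
    rw [max_eq_right hle]; ring
  · push_neg at h
    have hge : 0 ≤ l - |b| / gam := by
      rw [sub_nonneg, div_le_iff₀ hg]; linarith
    rw [max_eq_left hge]
    field_simp
    rw [← sq_abs b]
    ring

theorem mcp_infimum_vector (p : ℕ) (gam : ℝ) (hgam : 0 < gam)
    (lam β : Fin p → ℝ) (hlam : ∀ j, 0 < lam j) :
    sInf {x : ℝ | ∃ ω : Fin p → ℝ, (∀ j, 0 ≤ ω j) ∧
        x = (∑ j, ω j * |β j|) + gam / 2 * ∑ j, (ω j - lam j) ^ 2} =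
      ∑ j, lam j *
        (if |β j| ≥ lam j * gam then lam j * gam / 2
         else |β j| - (β j) ^ 2 / (2 * lam j * gam)) := by
  set M := ∑ j, lam j *
        (if |β j| ≥ lam j * gam then lam j * gam / 2
         else |β j| - (β j) ^ 2 / (2 * lam j * gam)) with hM
  have hlb : ∀ x ∈ {x : ℝ | ∃ ω : Fin p → ℝ, (∀ j, 0 ≤ ω j) ∧
        x = (∑ j, ω j * |β j|) + gam / 2 * ∑ j, (ω j - lam j) ^ 2}, M ≤ x := by
    rintro x ⟨ω, hω, rfl⟩
    have : (∑ j, ω j * |β j|) + gam / 2 * ∑ j, (ω j - lam j) ^ 2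
        = ∑ j, (ω j * |β j| + gam / 2 * (ω j - lam j) ^ 2) := by
      rw [Finset.mul_sum, ← Finset.sum_add_distrib]
    rw [this, hM]
    exact Finset.sum_le_sum fun j _ => point_ge gam (lam j) (β j) (ω j) hgam (hlam j) (hω j)
  have hmem : M ∈ {x : ℝ | ∃ ω : Fin p → ℝ, (∀ j, 0 ≤ ω j) ∧
        x = (∑ j, ω j * |β j|) + gam / 2 * ∑ j, (ω j - lam j) ^ 2} := by
    refine ⟨fun j => max (lam j - |β j| / gam) 0, fun j => le_max_right _ _, ?_⟩
    have : (∑ j, max (lam j - |β j| / gam) 0 * |β j|) + gam / 2 * ∑ j, (max (lam j - |β j| / gam) 0 - lam j) ^ 2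
        = ∑ j, (max (lam j - |β j| / gam) 0 * |β j| + gam / 2 * (max (lam j - |β j| / gam) 0 - lam j) ^ 2) := by
      rw [Finset.mul_sum, ← Finset.sum_add_distrib]
    rw [this, hM]
    exact Finset.sum_congr rfl fun j _ => (point_eq gam (lam j) (β j) hgam (hlam j)).symm
  exact le_antisymm (csInf_le ⟨M, hlb⟩ hmem) (le_csInf ⟨M, hmem⟩ hlb)
end

section
/- Let J(β, λ) = (1/2)‖y − Xβ‖₂² + Σⱼ λⱼΨ_γ(|βⱼ|) where λⱼΨ_γ(|βⱼ|) is the MCP value as the minimum of ω ↦ ωᵀ|β| + (γ/2)‖ω − λ‖₂² over ω ≥ 0. If (β^{(k+1)}, λ^{(k+1)}) is generated from (β^{(k)}, λ^{(k)}) by the ALM updates — ω^{(k)} = argmin_{ω≥0} {ωᵀ|β^{(k)}| + (γ/2)‖ω − λ^{(k)}‖²}, λ^{(k+1)} = ω^{(k)}, β^{(k+1)} = argmin_β {(1/2)‖y − Xβ‖² + Σⱼ ωⱼ^{(k)}|βⱼ|} — then J(β^{(k+1)}, λ^{(k+1)}) ≤ J(β^{(k)}, λ^{(k)}). -/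
theorem alm_descent (n p : ℕ) (y : Fin n → ℝ) (X : Matrix (Fin n) (Fin p) ℝ)
    (gam : ℝ) (hgam : 0 < gam)
    (J : (Fin p → ℝ) → (Fin p → ℝ) → ℝ)
    (hJ : ∀ β lam, J β lam =
      (1 / 2) * ∑ i, (y i - ∑ j, X i j * β j) ^ 2 +
        sInf {x : ℝ | ∃ ω : Fin p → ℝ, (∀ j, 0 ≤ ω j) ∧
          x = (∑ j, ω j * |β j|) + gam / 2 * ∑ j, (ω j - lam j) ^ 2})
    (βk lamk ωk βk1 lamk1 : Fin p → ℝ)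
    (hlamk : ∀ j, 0 < lamk j)
    (hωk_nonneg : ∀ j, 0 ≤ ωk j)
    (hωk : ∀ ω : Fin p → ℝ, (∀ j, 0 ≤ ω j) →
      (∑ j, ωk j * |βk j|) + gam / 2 * ∑ j, (ωk j - lamk j) ^ 2 ≤
        (∑ j, ω j * |βk j|) + gam / 2 * ∑ j, (ω j - lamk j) ^ 2)
    (hlamk1 : lamk1 = ωk)
    (hβk1 : ∀ β : Fin p → ℝ,
      (1 / 2) * ∑ i, (y i - ∑ j, X i j * βk1 j) ^ 2 + ∑ j, ωk j * |βk1 j| ≤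
        (1 / 2) * ∑ i, (y i - ∑ j, X i j * β j) ^ 2 + ∑ j, ωk j * |β j|) :
    J βk1 lamk1 ≤ J βk lamk := by
  subst hlamk1
  rw [hJ, hJ]
  have hnn : ∀ (β lam : Fin p → ℝ) (x : ℝ),
      x ∈ {x : ℝ | ∃ ω : Fin p → ℝ, (∀ j, 0 ≤ ω j) ∧
        x = (∑ j, ω j * |β j|) + gam / 2 * ∑ j, (ω j - lam j) ^ 2} → 0 ≤ x := by
    rintro β lam x ⟨ω, hω, rfl⟩
    have h1 : 0 ≤ ∑ j, ω j * |β j| :=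
      Finset.sum_nonneg fun j _ => mul_nonneg (hω j) (abs_nonneg _)
    have h2 : 0 ≤ ∑ j, (ω j - lam j) ^ 2 :=
      Finset.sum_nonneg fun j _ => sq_nonneg _
    positivity
  -- Step 1: sInf at (βk1, lamk1) ≤ Σ lamk1|βk1|
  have step1 : sInf {x : ℝ | ∃ ω : Fin p → ℝ, (∀ j, 0 ≤ ω j) ∧
      x = (∑ j, ω j * |βk1 j|) + gam / 2 * ∑ j, (ω j - lamk1 j) ^ 2} ≤
      ∑ j, lamk1 j * |βk1 j| := by
    have hmem : ∑ j, lamk1 j * |βk1 j| ∈ {x : ℝ | ∃ ω : Fin p → ℝ, (∀ j, 0 ≤ ω j) ∧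
        x = (∑ j, ω j * |βk1 j|) + gam / 2 * ∑ j, (ω j - lamk1 j) ^ 2} := by
      exact ⟨lamk1, hωk_nonneg, by simp⟩
    exact csInf_le ⟨0, fun x hx => hnn _ _ x hx⟩ hmem
  -- Step 2: Σ lamk1|βk| ≤ sInf at (βk, lamk)
  have step2 : (∑ j, lamk1 j * |βk j|) ≤ sInf {x : ℝ | ∃ ω : Fin p → ℝ, (∀ j, 0 ≤ ω j) ∧
      x = (∑ j, ω j * |βk j|) + gam / 2 * ∑ j, (ω j - lamk j) ^ 2} := by
    have hne : Set.Nonempty {x : ℝ | ∃ ω : Fin p → ℝ, (∀ j, 0 ≤ ω j) ∧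
        x = (∑ j, ω j * |βk j|) + gam / 2 * ∑ j, (ω j - lamk j) ^ 2} :=
      ⟨_, lamk1, hωk_nonneg, rfl⟩
    apply le_csInf hne
    rintro x ⟨ω, hω, rfl⟩
    have h := hωk ω hω
    have h2 : 0 ≤ gam / 2 * ∑ j, (lamk1 j - lamk j) ^ 2 := by
      have : 0 ≤ ∑ j, (lamk1 j - lamk j) ^ 2 :=
        Finset.sum_nonneg fun j _ => sq_nonneg _
      positivity
    linarith
  have h3 := hβk1 βk
  linarith
end

section
/- With a single common tuning parameter λ₁ = ⋯ = λₚ = λ > 0, the objective minimized jointly over β and ω ≥ 0, namely (1/2)‖y − Xβ‖₂² + ωᵀ|β| + (γ/2)‖ω − λ𝟙‖₂², has the same infimum over (β, ω) as the MCP-penalized regression (1/2)‖y − Xβ‖₂² + Σⱼ P_{λ,γ}(βⱼ) over β. -/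
/-!
For fixed `b`, the penalty term `w * |b| + γ / 2 * (w - λ) ^ 2` is a convex quadratic in `w`
whose minimiser over `w ≥ 0` is `max (λ - |b| / γ) 0`, and its minimum value is exactly the MCP
penalty `P_{λ,γ}(b)`. Minimising out `ω` coordinatewise therefore turns the joint objective into
the MCP objective: every joint value dominates an MCP value at the same `β`, and every MCP value
is a joint value at `ω = mcpWeight`.
-/

open Finset

noncomputable def mcpPenalty (lam gam b : ℝ) : ℝ :=
  if |b| < lam * gam then lam * |b| - b ^ 2 / (2 * gam) else lam ^ 2 * gam / 2

noncomputable def mcpWeight (lam gam b : ℝ) : ℝ :=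
  max (lam - |b| / gam) 0

section

variable {lam gam : ℝ}

theorem mcpPenalty_le (hgam : 0 < gam) {b w : ℝ} (hw : 0 ≤ w) :
    mcpPenalty lam gam b ≤ w * |b| + gam / 2 * (w - lam) ^ 2 := by
  unfold mcpPenalty
  split_ifs with h
  · have gap : w * |b| + gam / 2 * (w - lam) ^ 2 - (lam * |b| - b ^ 2 / (2 * gam)) =
        gam / 2 * (w - lam + |b| / gam) ^ 2 := by
      rw [← sq_abs b]
      field_simp
      ring
    nlinarith [sq_nonneg (w - lam + |b| / gam)]
  · have hb : lam * gam ≤ |b| := not_lt.mp h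
    nlinarith [mul_le_mul_of_nonneg_left hb hw, sq_nonneg w]

theorem mcpPenalty_eq_mcpWeight (hgam : 0 < gam) (b : ℝ) :
    mcpPenalty lam gam b =
      mcpWeight lam gam b * |b| + gam / 2 * (mcpWeight lam gam b - lam) ^ 2 := by
  unfold mcpPenalty mcpWeight
  split_ifs with h
  · have hw : 0 ≤ lam - |b| / gam := by
      rw [sub_nonneg, div_le_iff₀ hgam]
      exact h.le
    rw [max_eq_left hw, ← sq_abs b]
    field_simp
    ring
  · have hw : lam - |b| / gam ≤ 0 := by
      rw [sub_nonpos, le_div_iff₀ hgam]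
      exact not_lt.mp h
    rw [max_eq_right hw]
    ring

variable {ι : Type*} [Fintype ι]

theorem sum_mcpPenalty_le (hgam : 0 < gam) {β ω : ι → ℝ} (hω : ∀ j, 0 ≤ ω j) :
    ∑ j, mcpPenalty lam gam (β j) ≤ (∑ j, ω j * |β j|) + gam / 2 * ∑ j, (ω j - lam) ^ 2 := by
  rw [mul_sum, ← sum_add_distrib]
  exact sum_le_sum fun j _ => mcpPenalty_le hgam (hω j)

theorem sum_mcpPenalty_eq_mcpWeight (hgam : 0 < gam) (β : ι → ℝ) :
    ∑ j, mcpPenalty lam gam (β j) =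
      (∑ j, mcpWeight lam gam (β j) * |β j|) +
        gam / 2 * ∑ j, (mcpWeight lam gam (β j) - lam) ^ 2 := by
  rw [mul_sum, ← sum_add_distrib]
  exact sum_congr rfl fun j _ => mcpPenalty_eq_mcpWeight hgam (β j)

end

theorem joint_min_eq_mcp_min_general (n p : ℕ) (y : Fin n → ℝ) (X : Matrix (Fin n) (Fin p) ℝ)
    (lam gam : ℝ) (hgam : 0 < gam) :
    sInf {v : ℝ | ∃ β ω : Fin p → ℝ, (∀ j, 0 ≤ ω j) ∧
        v = (1 / 2) * ∑ i, (y i - ∑ j, X i j * β j) ^ 2 +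
          (∑ j, ω j * |β j|) + gam / 2 * ∑ j, (ω j - lam) ^ 2} =
      sInf {v : ℝ | ∃ β : Fin p → ℝ,
        v = (1 / 2) * ∑ i, (y i - ∑ j, X i j * β j) ^ 2 +
          ∑ j, (if |β j| < lam * gam then lam * |β j| - (β j) ^ 2 / (2 * gam)
                else lam ^ 2 * gam / 2)} := by
  refine csInf_eq_csInf_of_forall_exists_le ?_ ?_
  · rintro _ ⟨β, ω, hω, rfl⟩
    refine ⟨_, ⟨β, rfl⟩, ?_⟩
    rw [add_assoc]
    exact (add_le_add_iff_left _).mpr (sum_mcpPenalty_le hgam hω)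
  · rintro _ ⟨β, rfl⟩
    refine ⟨_, ⟨β, fun j => mcpWeight lam gam (β j), fun j => le_max_right _ _, rfl⟩, ?_⟩
    rw [add_assoc]
    exact (congrArg _ (sum_mcpPenalty_eq_mcpWeight hgam β)).ge

theorem joint_min_eq_mcp_min (n p : ℕ) (y : Fin n → ℝ) (X : Matrix (Fin n) (Fin p) ℝ)
    (lam gam : ℝ) (hlam : 0 < lam) (hgam : 0 < gam) :
    sInf {v : ℝ | ∃ β ω : Fin p → ℝ, (∀ j, 0 ≤ ω j) ∧
        v = (1 / 2) * ∑ i, (y i - ∑ j, X i j * β j) ^ 2 +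
          (∑ j, ω j * |β j|) + gam / 2 * ∑ j, (ω j - lam) ^ 2} =
      sInf {v : ℝ | ∃ β : Fin p → ℝ,
        v = (1 / 2) * ∑ i, (y i - ∑ j, X i j * β j) ^ 2 +
          ∑ j, (if |β j| < lam * gam then lam * |β j| - (β j) ^ 2 / (2 * gam)
                else lam ^ 2 * gam / 2)} :=
  joint_min_eq_mcp_min_general n p y X lam gam hgam
end

section
/- For λ > 0, γ > 1 and any t, define the MCP objective for scalar thresholding g(β) = (1/2)(t − β)² + P_{λ,γ}(β). If |t| ≤ λ then β = 0 is a global minimizer of g. -/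
theorem mcp_threshold_zero (lam gam t : ℝ) (hlam : 0 < lam) (hgam : 1 < gam)
    (ht : |t| ≤ lam) :
    ∀ β : ℝ,
      (1 / 2) * (t - 0) ^ 2 +
          (if |(0 : ℝ)| < lam * gam then lam * |(0 : ℝ)| - (0 : ℝ) ^ 2 / (2 * gam)
           else lam ^ 2 * gam / 2) ≤
        (1 / 2) * (t - β) ^ 2 +
          (if |β| < lam * gam then lam * |β| - β ^ 2 / (2 * gam) else lam ^ 2 * gam / 2) := by
  intro β
  have h0 : |(0 : ℝ)| < lam * gam := by
    rw [abs_zero]; positivity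
  rw [if_pos h0, abs_zero]
  norm_num
  have htb : t * β ≤ lam * |β| := by
    calc t * β ≤ |t * β| := le_abs_self _
    _ = |t| * |β| := abs_mul t β
    _ ≤ lam * |β| := by gcongr
  have hb2 : β ^ 2 = |β| ^ 2 := (sq_abs β).symm
  have hgam0 : (0:ℝ) < 2 * gam := by linarith
  split_ifs with h
  · have hdiv : β ^ 2 / (2 * gam) ≤ β ^ 2 / 2 := by
      apply div_le_div_of_nonneg_left (sq_nonneg β) two_pos
      linarith
    nlinarith [sq_nonneg β]
  · nlinarith [sq_nonneg (|β| - lam), mul_pos (mul_pos hlam hlam) (sub_pos.mpr hgam)]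
end
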